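/- Let A be an abelian group and let φ : ℚ^n → A be a constructible function (constant on each piece of a finite partition of ℚ^n into constructible sets). Let f : ℚ^n → ℚ^m be an affine linear map. Then the pushforward f_*φ, defined by (f_*φ)(w) = ∫_{f^{-1}(w)} φ dχ', is a constructible function on ℚ^m, and ∫_{ℚ^n} φ dχ' = ∫_{ℚ^m} f_*φ dχ'. -/

import Mathlib

variable {V : Type} [AddCommGroup V] [Module ℚ V]

/-- A (rational) polyhedron in a `ℚ`-vector space: a finite intersection of
closed affine half-spaces. -/
def IsPolyhedron (S : Set V) : Prop :=
  ∃ (m : ℕ) (f : Fin m → (V →ᵃ[ℚ] ℚ)), S = {v | ∀ i, 0 ≤ f i v}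

/-- Constructible subsets: the Boolean algebra generated by polyhedra. -/
inductive IsConstructible : Set V → Prop
  | poly {S : Set V} : IsPolyhedron S → IsConstructible S
  | compl {S : Set V} : IsConstructible S → IsConstructible Sᶜ
  | union {S T : Set V} : IsConstructible S → IsConstructible T →
      IsConstructible (S ∪ T)

/-- `χ` is a bounded Euler characteristic: a `ℤ`-valued invariant of
constructible sets, additive on disjoint unions, assigning `1` to every
non-empty polyhedron. -/
def IsEulerChar (χ : Set V → ℤ) : Prop :=
  (∀ A B : Set V, IsConstructible A → IsConstructible B → Disjoint A B →
    χ (A ∪ B) = χ A + χ B) ∧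
  (∀ S : Set V, IsPolyhedron S → S.Nonempty → χ S = 1)

/-- A function to an abelian group is constructible if it is constant on each
piece of a finite partition into constructible sets. -/
def IsConstructibleFun {A : Type} (φ : V → A) : Prop :=
  ∃ (r : ℕ) (σ : Fin r → Set V) (a : Fin r → A),
    (∀ i, IsConstructible (σ i)) ∧ (∀ v : V, ∃! i, v ∈ σ i) ∧
    (∀ i, ∀ v ∈ σ i, φ v = a i)

/-- `c` is the integral `∫_Γ φ dχ`, computed from a witnessing constructible
partition on which `φ` is constant. -/
def IntegralEq {A : Type} [AddCommGroup A] (χ : Set V → ℤ) (φ : V → A)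
    (Γ : Set V) (c : A) : Prop :=
  ∃ (r : ℕ) (σ : Fin r → Set V) (a : Fin r → A),
    (∀ i, IsConstructible (σ i)) ∧ (∀ v : V, ∃! i, v ∈ σ i) ∧
    (∀ i, ∀ v ∈ σ i, φ v = a i) ∧
    c = ∑ i, χ (σ i ∩ Γ) • a i

/-!
Every constructible function is a `ℤ`-combination `∑ 1_{P_j} • b_j` of indicators of polyhedra,
and the `χ`-integral of such a combination is `∑ χ(P_j) • b_j` whatever the presentation (split
into the atoms of the Boolean algebra generated by the sets involved). The fiber of a polyhedron
over `w` is a polyhedron, so `χ(P ∩ f⁻¹{w})` is `1` or `0` according as `w ∈ f(P)`; hence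
`f_*φ = ∑ 1_{f(P_j)} • b_j`. Images of polyhedra are polyhedra by Fourier–Motzkin elimination,
and `χ(f(P_j)) = χ(P_j)` since both are `1` or both `0`, so the two integrals agree.
-/

theorem Finset.exists_between_of_le {α : Type*} [LinearOrder α] [Nonempty α] (s t : Finset α)
    (H : ∀ x ∈ s, ∀ y ∈ t, x ≤ y) : ∃ b, (∀ x ∈ s, x ≤ b) ∧ ∀ y ∈ t, b ≤ y := by
  by_cases hs : s.Nonempty
  · exact ⟨s.max' hs, fun x hx => s.le_max' x hx,
      fun y hy => s.max'_le hs y fun x hx => H x hx y hy⟩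
  by_cases ht : t.Nonempty
  · exact ⟨t.min' ht, fun x hx => (hs ⟨x, hx⟩).elim, fun y hy => t.min'_le y hy⟩
  · exact Nonempty.elim ‹_› fun b =>
      ⟨b, fun x hx => (hs ⟨x, hx⟩).elim, fun y hy => (ht ⟨y, hy⟩).elim⟩

theorem exists_forall_nonneg_add_mul_iff {K ι : Type*} [Field K] [LinearOrder K]
    [IsStrictOrderedRing K] [Fintype ι] (a b : ι → K) :
    (∃ t, ∀ i, 0 ≤ a i + t * b i) ↔
      (∀ i, b i = 0 → 0 ≤ a i) ∧ ∀ i j, 0 < b i → b j < 0 → 0 ≤ -b j * a i + b i * a j := by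
  constructor
  · rintro ⟨t, ht⟩
    refine ⟨fun i hi => by simpa [hi] using ht i, fun i j hi hj => ?_⟩
    nlinarith [mul_nonneg (neg_nonneg.mpr hj.le) (ht i), mul_nonneg hi.le (ht j)]
  · rintro ⟨hzero, hpair⟩
    -- `t` must lie above `-a i / b i` for `b i > 0` and below `-a j / b j` for `b j < 0`.
    have lower {i t} (hi : 0 < b i) : 0 ≤ a i + t * b i ↔ -a i / b i ≤ t := by
      rw [div_le_iff₀ hi]; constructor <;> intro <;> linarith
    have upper {j t} (hj : b j < 0) : 0 ≤ a j + t * b j ↔ t ≤ -a j / b j := by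
      rw [le_div_iff_of_neg hj]; constructor <;> intro <;> linarith
    obtain ⟨t, hlo, hhi⟩ := Finset.exists_between_of_le
      ((Finset.univ.filter (0 < b ·)).image fun i => -a i / b i)
      ((Finset.univ.filter (b · < 0)).image fun j => -a j / b j) (by
        simp only [Finset.mem_image, Finset.mem_filter, Finset.mem_univ, true_and]
        rintro _ ⟨i, hi, rfl⟩ _ ⟨j, hj, rfl⟩
        rw [← upper hj, ← mul_le_mul_iff_of_pos_right hi]
        have := hpair i j hi hj
        field_simp
        linarith)
    refine ⟨t, fun i => ?_⟩
    rcases lt_trichotomy (b i) 0 with hi | hi | hi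
    · exact (upper hi).mpr (hhi _ (Finset.mem_image_of_mem _ (by simpa using hi)))
    · simpa [hi] using hzero i hi
    · exact (lower hi).mpr (hlo _ (Finset.mem_image_of_mem _ (by simpa using hi)))

section Polyhedra

variable {W : Type} [AddCommGroup W] [Module ℚ W]

theorem isPolyhedron_of_fintype {ι : Type} [Fintype ι] (g : ι → V →ᵃ[ℚ] ℚ) :
    IsPolyhedron {v : V | ∀ i, 0 ≤ g i v} :=
  ⟨Fintype.card ι, g ∘ (Fintype.equivFin ι).symm, by
    ext v; simp [(Fintype.equivFin ι).symm.forall_congr_left]⟩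

theorem isPolyhedron_univ : IsPolyhedron (Set.univ : Set V) :=
  ⟨0, Fin.elim0, by ext; simp⟩

theorem IsPolyhedron.inter {S T : Set V} (hS : IsPolyhedron S) (hT : IsPolyhedron T) :
    IsPolyhedron (S ∩ T) := by
  obtain ⟨_, g, rfl⟩ := hS
  obtain ⟨_, h, rfl⟩ := hT
  convert isPolyhedron_of_fintype (Sum.elim g h) using 1
  ext; simp [Sum.forall]

theorem IsPolyhedron.preimage {S : Set V} (hS : IsPolyhedron S) (f : W →ᵃ[ℚ] V) :
    IsPolyhedron (f ⁻¹' S) := by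
  obtain ⟨m, g, rfl⟩ := hS
  exact ⟨m, fun i => (g i).comp f, rfl⟩

theorem isPolyhedron_setOf_eq {ι : Type} [Fintype ι] (F G : V →ᵃ[ℚ] (ι → ℚ)) :
    IsPolyhedron {v | F v = G v} := by
  convert isPolyhedron_of_fintype (Sum.elim (fun i => (AffineMap.proj i).comp (F - G))
    (fun i => (AffineMap.proj i).comp (G - F))) using 1
  ext v
  simp only [Set.mem_ofPred_eq, Sum.forall, Sum.elim_inl, Sum.elim_inr, AffineMap.comp_apply,
    AffineMap.proj_apply, AffineMap.coe_sub, Pi.sub_apply, sub_nonneg, ← forall_and,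
    ← le_antisymm_iff, funext_iff]
  exact forall_congr' fun _ => eq_comm

theorem isPolyhedron_preimage_singleton {ι : Type} [Fintype ι] (f : V →ᵃ[ℚ] (ι → ℚ))
    (w : ι → ℚ) : IsPolyhedron (f ⁻¹' {w}) :=
  isPolyhedron_setOf_eq f (AffineMap.const ℚ V w)

/-- Fourier–Motzkin elimination of one direction. -/
theorem IsPolyhedron.sweep_line {P : Set V} (hP : IsPolyhedron P) (d : V) :
    IsPolyhedron {u | ∃ t : ℚ, u + t • d ∈ P} := by
  obtain ⟨m, g, rfl⟩ := hP
  set b : Fin m → ℚ := fun i => (g i).linear d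
  have hg : ∀ i u (t : ℚ), g i (u + t • d) = g i u + t * b i := fun i u t => by
    rw [add_comm, ← vadd_eq_add, AffineMap.map_vadd, map_smul, vadd_eq_add, smul_eq_mul, add_comm]
  convert isPolyhedron_of_fintype (Sum.elim (fun i : {i // b i = 0} => g i)
    fun p : {p : Fin m × Fin m // 0 < b p.1 ∧ b p.2 < 0} =>
      (-b p.1.2) • g p.1.1 + b p.1.1 • g p.1.2) using 1
  ext u
  simp only [Set.mem_ofPred_eq, hg, exists_forall_nonneg_add_mul_iff, Sum.forall, Sum.elim_inl,
    Sum.elim_inr, Subtype.forall, Prod.forall, AffineMap.coe_add, AffineMap.coe_smul,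
    Pi.add_apply, Pi.smul_apply, smul_eq_mul, and_imp]

theorem IsPolyhedron.sweep_submodule {P : Set V} (hP : IsPolyhedron P) {U : Submodule ℚ V}
    (hU : U.FG) : IsPolyhedron {u | ∃ z ∈ U, u + z ∈ P} := by
  classical
  obtain ⟨s, rfl⟩ := hU
  induction s using Finset.induction_on with
  | empty => simpa using hP
  | insert d s _ ih =>
    convert ih.sweep_line d using 1
    ext u
    simp only [Finset.coe_insert, Submodule.mem_span_insert, Set.mem_ofPred_eq]
    constructor
    · rintro ⟨_, ⟨t, z, hz, rfl⟩, hu⟩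
      exact ⟨t, z, hz, by rwa [← add_assoc] at hu⟩
    · rintro ⟨t, z, hz, hu⟩
      exact ⟨t • d + z, ⟨t, z, hz, rfl⟩, by rwa [← add_assoc]⟩

theorem IsPolyhedron.image [FiniteDimensional ℚ V] {ι : Type} [Fintype ι] {P : Set V}
    (hP : IsPolyhedron P) (f : V →ᵃ[ℚ] (ι → ℚ)) : IsPolyhedron (f '' P) := by
  have hgraph := (hP.preimage (LinearMap.fst ℚ V (ι → ℚ)).toAffineMap).inter
    (isPolyhedron_setOf_eq (f.comp (LinearMap.fst ℚ V (ι → ℚ)).toAffineMap)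
      (LinearMap.snd ℚ V (ι → ℚ)).toAffineMap)
  have hU : (LinearMap.range (LinearMap.inl ℚ V (ι → ℚ))).FG := by
    rw [LinearMap.range_eq_map]; exact Module.Finite.fg_top.map _
  convert (hgraph.sweep_submodule hU).preimage (LinearMap.inr ℚ V (ι → ℚ)).toAffineMap using 1
  ext w
  simp

section Constructible

theorem isConstructibleFun_of_fintype {A ι : Type} [Fintype ι] {φ : V → A} (σ : ι → Set V)
    (a : ι → A) (hσ : ∀ i, IsConstructible (σ i)) (hpart : ∀ v, ∃! i, v ∈ σ i)
    (hφ : ∀ i, ∀ v ∈ σ i, φ v = a i) : IsConstructibleFun φ := by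
  set e := Fintype.equivFin ι
  refine ⟨Fintype.card ι, σ ∘ e.symm, a ∘ e.symm, fun j => hσ _, fun v => ?_,
    fun j => hφ (e.symm j)⟩
  obtain ⟨i, hi, huniq⟩ := hpart v
  exact ⟨e i, by simpa using hi, fun j hj => e.symm_apply_eq.mp (huniq _ hj)⟩

variable {A : Type} [AddCommGroup A]

theorem IsConstructible.univ : IsConstructible (Set.univ : Set V) :=
  .poly isPolyhedron_univ

theorem IsConstructible.empty : IsConstructible (∅ : Set V) := by
  simpa using IsConstructible.univ.compl

theorem IsConstructible.inter {S T : Set V} (hS : IsConstructible S) (hT : IsConstructible T) :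
    IsConstructible (S ∩ T) := by
  simpa [Set.compl_union] using (hS.compl.union hT.compl).compl

theorem IsConstructible.biUnion {ι : Type} {S : ι → Set V} (hS : ∀ i, IsConstructible (S i))
    (s : Finset ι) : IsConstructible (⋃ i ∈ s, S i) := by
  classical
  induction s using Finset.induction_on with
  | empty => simpa using IsConstructible.empty
  | insert i s _ ih => simpa [Finset.set_biUnion_insert] using (hS i).union ih

theorem IsConstructible.iInter {ι : Type} [Fintype ι] {S : ι → Set V}
    (hS : ∀ i, IsConstructible (S i)) : IsConstructible (⋂ i, S i) := by
  simpa using (IsConstructible.biUnion (fun i => (hS i).compl) Finset.univ).compl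

variable (A) in
def polyhedralSpan : Submodule ℤ (V → A) :=
  Submodule.span ℤ {g | ∃ P a, IsPolyhedron P ∧ P.indicator (fun _ => a) = g}

/-- Stated for all `g` in the span, not only constants, so that the induction passes through
unions: `1_{S ∪ T} g = 1_S g + 1_T g - 1_S (1_T g)`. -/
theorem IsConstructible.indicator_mem_polyhedralSpan {S : Set V} (hS : IsConstructible S)
    {g : V → A} (hg : g ∈ polyhedralSpan A) : S.indicator g ∈ polyhedralSpan A := by
  induction hS generalizing g with
  | @poly S hP =>
    suffices polyhedralSpan A ≤
        (polyhedralSpan A).comap (Set.indicatorHom A S).toIntLinearMap from this hg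
    refine Submodule.span_le.mpr ?_
    rintro _ ⟨P, a, hP', rfl⟩
    exact Submodule.subset_span ⟨S ∩ P, a, hP.inter hP', (Set.indicator_indicator _ _ _).symm⟩
  | compl _ ih => rw [Set.indicator_compl]; exact sub_mem hg (ih hg)
  | union _ _ ihS ihT =>
    rw [eq_sub_of_add_eq (Set.indicator_union_add_inter g _ _), ← Set.indicator_indicator]
    exact sub_mem (add_mem (ihS hg) (ihT hg)) (ihS (ihT hg))

theorem eq_sum_indicator_of_partition {X ι : Type*} [Fintype ι] {σ : ι → Set X} {a : ι → A}
    {φ : X → A} (hpart : ∀ x, ∃! i, x ∈ σ i) (hφ : ∀ i, ∀ x ∈ σ i, φ x = a i) (v : X) :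
    φ v = ∑ i, (σ i).indicator (fun _ => a i) v := by
  obtain ⟨i, hi, huniq⟩ := hpart v
  rw [Finset.sum_eq_single i (fun j _ hj => Set.indicator_of_notMem (fun hv => hj (huniq j hv)) _)
    (by simp), Set.indicator_of_mem hi, hφ i v hi]

theorem IsConstructibleFun.exists_eq_sum_indicator_polyhedra {φ : V → A}
    (hφ : IsConstructibleFun φ) :
    ∃ (N : ℕ) (P : Fin N → Set V) (b : Fin N → A), (∀ j, IsPolyhedron (P j)) ∧
      ∀ v, φ v = ∑ j, (P j).indicator (fun _ => b j) v := by
  obtain ⟨r, σ, a, hσ, hpart, hφσ⟩ := hφ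
  have hφ : φ = ∑ i, (σ i).indicator (fun _ => a i) :=
    funext fun v => by rw [Finset.sum_apply]; exact eq_sum_indicator_of_partition hpart hφσ v
  have hmem : φ ∈ polyhedralSpan A := hφ ▸ sum_mem fun i _ =>
    (hσ i).indicator_mem_polyhedralSpan
      (Submodule.subset_span ⟨Set.univ, a i, isPolyhedron_univ, Set.indicator_univ _⟩)
  obtain ⟨N, c, g, hg⟩ := Submodule.mem_span_set'.mp hmem
  choose P b hP hPb using fun j => (g j).2
  refine ⟨N, P, fun j => c j • b j, hP, fun v => ?_⟩
  simp only [← hg, Finset.sum_apply, Pi.smul_apply, ← hPb, Set.indicator_const_smul_apply]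

end Constructible

section EulerChar

variable {A : Type} [AddCommGroup A] {χ : Set V → ℤ}

theorem IsEulerChar.empty (hχ : IsEulerChar χ) : χ ∅ = 0 := by
  simpa using hχ.1 ∅ ∅ .empty .empty (Set.disjoint_empty _)

theorem IsEulerChar.biUnion (hχ : IsEulerChar χ) {ι : Type} {B : ι → Set V}
    (hB : ∀ i, IsConstructible (B i)) (hdisj : Pairwise (Function.onFun Disjoint B))
    (s : Finset ι) :
    χ (⋃ i ∈ s, B i) = ∑ i ∈ s, χ (B i) := by
  classical
  induction s using Finset.induction_on with
  | empty => simpa using hχ.empty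
  | insert j s hj ih =>
    rw [Finset.set_biUnion_insert, Finset.sum_insert hj,
      hχ.1 _ _ (hB j) (.biUnion hB s) ?_, ih]
    exact Set.disjoint_iUnion₂_right.mpr fun i hi => hdisj (ne_of_mem_of_not_mem hi hj).symm

def atom {X ι : Type*} (S : ι → Set X) (J : Finset ι) : Set X :=
  {x | ∀ i, x ∈ S i ↔ i ∈ J}

section Atoms

variable {X ι : Type*} {S : ι → Set X}

theorem pairwise_disjoint_atom : Pairwise (Function.onFun Disjoint (atom S)) := fun _ _ hJ =>
  Set.disjoint_left.mpr fun _ hx hx' => hJ (Finset.ext fun i => (hx i).symm.trans (hx' i))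

variable [Fintype ι]

theorem existsUnique_mem_atom (x : X) : ∃! J, x ∈ atom S J := by
  classical
  exact ⟨Finset.univ.filter (x ∈ S ·), fun i => by simp,
    fun J hJ => Finset.ext fun i => by simp [hJ i]⟩

open Classical in
theorem eq_biUnion_atom (i : ι) : S i = ⋃ J ∈ Finset.univ.filter (i ∈ ·), atom S J := by
  ext x
  simp only [Set.mem_iUnion, Finset.mem_filter, Finset.mem_univ, true_and, exists_prop]
  refine ⟨fun hx => ?_, fun ⟨J, hiJ, hx⟩ => (hx i).mpr hiJ⟩
  obtain ⟨J, hJ, -⟩ := existsUnique_mem_atom (S := S) x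
  exact ⟨J, (hJ i).mp hx, hJ⟩

theorem sum_indicator_eq_of_mem_atom {J : Finset ι} {x : X} (hx : x ∈ atom S J) (a : ι → A) :
    ∑ i, (S i).indicator (fun _ => a i) x = ∑ i ∈ J, a i := by
  classical
  simp only [Set.indicator_apply, hx _, Finset.sum_ite_mem, Finset.univ_inter]

end Atoms

section ConstructibleAtoms

variable {ι : Type} [Fintype ι] {S : ι → Set V}

theorem isConstructible_atom (hS : ∀ i, IsConstructible (S i)) (J : Finset ι) :
    IsConstructible (atom S J) := by
  classical
  have : atom S J = ⋂ i, if i ∈ J then S i else (S i)ᶜ := by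
    ext v
    simp only [atom, Set.mem_ofPred_eq, Set.mem_iInter]
    refine forall_congr' fun i => ?_
    split_ifs with hi <;> simp [hi]
  rw [this]
  exact .iInter fun i => by split_ifs; exacts [hS i, (hS i).compl]

/-- Decompose into the atoms of the family `S`, on each of which the combination is constant. -/
theorem IsEulerChar.sum_smul_eq_zero (hχ : IsEulerChar χ) (hS : ∀ i, IsConstructible (S i))
    (a : ι → A) (h : ∀ v, ∑ i, (S i).indicator (fun _ => a i) v = 0) :
    ∑ i, χ (S i) • a i = 0 := by
  classical
  have hsplit : ∀ i, χ (S i) = ∑ J, if i ∈ J then χ (atom S J) else 0 := fun i => by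
    conv_lhs => rw [eq_biUnion_atom (S := S) i]
    rw [hχ.biUnion (isConstructible_atom hS) pairwise_disjoint_atom, Finset.sum_filter]
  calc ∑ i, χ (S i) • a i = ∑ J, χ (atom S J) • ∑ i ∈ J, a i := by
        simp only [hsplit, Finset.sum_smul, ite_smul, zero_smul, Finset.smul_sum]
        rw [Finset.sum_comm]
        simp only [Finset.sum_ite_mem, Finset.univ_inter]
    _ = 0 := Finset.sum_eq_zero fun J _ => by
        rcases (atom S J).eq_empty_or_nonempty with he | ⟨v, hv⟩
        · rw [he, hχ.empty, zero_smul]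
        · rw [← sum_indicator_eq_of_mem_atom hv, h v, smul_zero]

theorem isConstructibleFun_sum_indicator (hS : ∀ i, IsConstructible (S i)) (a : ι → A) :
    IsConstructibleFun fun v => ∑ i, (S i).indicator (fun _ => a i) v :=
  isConstructibleFun_of_fintype (atom S) (fun J => ∑ i ∈ J, a i)
    (isConstructible_atom hS) existsUnique_mem_atom fun _ _ hv => sum_indicator_eq_of_mem_atom hv a

end ConstructibleAtoms

theorem IsEulerChar.sum_smul_eq_of_sum_indicator_eq (hχ : IsEulerChar χ) {ι κ : Type}
    [Fintype ι] [Fintype κ] {S : ι → Set V} {T : κ → Set V} (hS : ∀ i, IsConstructible (S i))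
    (hT : ∀ k, IsConstructible (T k)) {a : ι → A} {b : κ → A}
    (h : ∀ v, ∑ i, (S i).indicator (fun _ => a i) v = ∑ k, (T k).indicator (fun _ => b k) v) :
    ∑ i, χ (S i) • a i = ∑ k, χ (T k) • b k := by
  have := hχ.sum_smul_eq_zero (S := Sum.elim S T) (Sum.forall.mpr ⟨hS, hT⟩) (Sum.elim a (-b))
    fun v => by simp [Fintype.sum_sum_type, Set.indicator_neg, h v]
  simpa [Fintype.sum_sum_type, ← sub_eq_add_neg, sub_eq_zero] using this

theorem IntegralEq.eq_sum_smul (hχ : IsEulerChar χ) {Γ : Set V} (hΓ : IsConstructible Γ)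
    {φ : V → A} {c : A} (h : IntegralEq χ φ Γ c) {ι : Type} [Fintype ι] {T : ι → Set V}
    (hT : ∀ k, IsConstructible (T k)) {b : ι → A}
    (hφ : ∀ v, φ v = ∑ k, (T k).indicator (fun _ => b k) v) :
    c = ∑ k, χ (T k ∩ Γ) • b k := by
  obtain ⟨r, σ, a, hσ, hpart, hσφ, rfl⟩ := h
  refine hχ.sum_smul_eq_of_sum_indicator_eq (fun i => (hσ i).inter hΓ)
    (fun k => (hT k).inter hΓ) fun v => ?_
  simp only [Set.inter_comm _ Γ, ← Set.indicator_indicator]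
  by_cases hv : v ∈ Γ
  · simp only [Set.indicator_of_mem hv, ← hφ, ← eq_sum_indicator_of_partition hpart hσφ]
  · simp only [Set.indicator_of_notMem hv, Finset.sum_const_zero]

variable {ι : Type} [Fintype ι] {P : Set V}

theorem IsEulerChar.apply_inter_preimage_singleton (hχ : IsEulerChar χ) (hP : IsPolyhedron P)
    (f : V →ᵃ[ℚ] (ι → ℚ)) (w : ι → ℚ) : χ (P ∩ f ⁻¹' {w}) = (f '' P).indicator 1 w := by
  rcases (P ∩ f ⁻¹' {w}).eq_empty_or_nonempty with he | ⟨v, hv, hfv⟩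
  · rw [he, hχ.empty, Set.indicator_of_notMem]
    rintro ⟨v, hv, rfl⟩
    exact Set.eq_empty_iff_forall_notMem.mp he v ⟨hv, rfl⟩
  · rw [hχ.2 _ (hP.inter (isPolyhedron_preimage_singleton f w)) ⟨v, hv, hfv⟩,
      Set.indicator_of_mem (show w ∈ f '' P from ⟨v, hv, hfv⟩), Pi.one_apply]

theorem IsEulerChar.apply_image [FiniteDimensional ℚ V] {χ' : Set (ι → ℚ) → ℤ}
    (hχ : IsEulerChar χ) (hχ' : IsEulerChar χ') (hP : IsPolyhedron P) (f : V →ᵃ[ℚ] (ι → ℚ)) :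
    χ' (f '' P) = χ P := by
  rcases P.eq_empty_or_nonempty with rfl | hne
  · rw [Set.image_empty, hχ'.empty, hχ.empty]
  · rw [hχ'.2 _ (hP.image f) (hne.image f), hχ.2 _ hP hne]

end EulerChar

/-- Motivic Fubini for affine maps: the fiberwise integral of a constructible
function along an affine map is constructible, and integrating it out gives the
total integral. -/
theorem stmt4 {n m : ℕ} {A : Type} [AddCommGroup A]
    (χn : Set (Fin n → ℚ) → ℤ) (χm : Set (Fin m → ℚ) → ℤ)
    (hχn : IsEulerChar χn) (hχm : IsEulerChar χm)
    (φ : (Fin n → ℚ) → A) (hφ : IsConstructibleFun φ)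
    (f : (Fin n → ℚ) →ᵃ[ℚ] (Fin m → ℚ)) :
    ∃ ψ : (Fin m → ℚ) → A, IsConstructibleFun ψ ∧
      (∀ w : Fin m → ℚ, IntegralEq χn φ (f ⁻¹' {w}) (ψ w)) ∧
      (∀ c c' : A, IntegralEq χn φ Set.univ c → IntegralEq χm ψ Set.univ c' →
        c = c') := by
  obtain ⟨N, P, b, hP, hφP⟩ := hφ.exists_eq_sum_indicator_polyhedra
  obtain ⟨r, σ, a, hσ, hpart, hφσ⟩ := hφ
  set ψ : (Fin m → ℚ) → A := fun w => ∑ i, χn (σ i ∩ f ⁻¹' {w}) • a i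
  have hfiber : ∀ w, IntegralEq χn φ (f ⁻¹' {w}) (ψ w) :=
    fun w => ⟨r, σ, a, hσ, hpart, hφσ, rfl⟩
  have hψ : ∀ w, ψ w = ∑ j, (f '' P j).indicator (fun _ => b j) w := fun w => by
    rw [(hfiber w).eq_sum_smul hχn (.poly (isPolyhedron_preimage_singleton f w))
      (fun j => .poly (hP j)) hφP]
    simp only [hχn.apply_inter_preimage_singleton (hP _), ← Set.indicator_smul_const_apply,
      Pi.one_apply, one_smul]
  have himage : ∀ j, IsConstructible (f '' P j) := fun j => .poly ((hP j).image f)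
  refine ⟨ψ, funext hψ ▸ isConstructibleFun_sum_indicator himage b, hfiber,
    fun c c' hc hc' => ?_⟩
  rw [hc.eq_sum_smul hχn .univ (fun j => .poly (hP j)) hφP,
    hc'.eq_sum_smul hχm .univ himage hψ]
  simp only [Set.inter_univ, hχn.apply_image hχm (hP _)]
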